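/- arXiv:2006.11353 — 4 statements merged into one kernel-verified Lean document; each statement's English description precedes it below -/
import Mathlib

section
/- Every comparability graph has clique chromatic number at most 2. -/
open SimpleGraph

/-- A maximal clique of a simple graph: a clique not properly contained in another clique. -/
def MaxClique {V : Type*} (G : SimpleGraph V) (s : Set V) : Prop :=
  G.IsClique s ∧ ∀ t : Set V, G.IsClique t → s ⊆ t → t = s

/-- A clique colouring: no inclusion-wise maximal clique with at least two vertices
is monochromatic. -/
def CliqueColoring {V α : Type*} (G : SimpleGraph V) (c : V → α) : Prop :=
  ∀ s : Set V, MaxClique G s → (∃ x ∈ s, ∃ y ∈ s, x ≠ y) →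
    ¬ ∃ a : α, ∀ x ∈ s, c x = a

/-- The clique chromatic number: least number of colours in a clique colouring. -/
noncomputable def cliqueChromaticNumber {V : Type*} (G : SimpleGraph V) : ℕ :=
  sInf {n : ℕ | ∃ c : V → Fin n, CliqueColoring G c}

/-!
Colour the minimal elements of the order with one colour and all other elements with the
other. Maximal cliques of the comparability graph are maximal chains. A maximal chain with two
elements has a least element (the order is well founded), and this element is minimal in the
whole order, since otherwise a smaller element could be added to the chain. Every other element
of the chain lies strictly above it, so it is not minimal, and the chain sees both colours.
-/

section Chain

variable {α : Type*}

lemma isClique_fromRel_le_iff [LE α] {s : Set α} :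
    (fromRel (· ≤ ·) : SimpleGraph α).IsClique s ↔ IsChain (· ≤ ·) s :=
  ⟨fun h _ hx _ hy hxy => ((fromRel_adj _ _ _).1 (h hx hy hxy)).2,
    fun h _ hx _ hy hxy => (fromRel_adj _ _ _).2 ⟨hxy, h hx hy hxy⟩⟩

lemma maxClique_fromRel_le_iff [LE α] {s : Set α} :
    MaxClique (fromRel (· ≤ ·) : SimpleGraph α) s ↔ IsMaxChain (· ≤ ·) s := by
  simp only [MaxClique, IsMaxChain, isClique_fromRel_le_iff, eq_comm (a := s)]

variable [Preorder α] {s : Set α} {m : α}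

lemma IsChain.isLeast_of_minimal (hs : IsChain (· ≤ ·) s) (hm : Minimal (· ∈ s) m) :
    IsLeast s m := by
  refine ⟨hm.prop, fun w hw => ?_⟩
  rcases eq_or_ne m w with rfl | hne
  · exact le_rfl
  · exact (hs hm.prop hw hne).elim id (hm.le_of_le hw)

lemma IsChain.exists_isLeast [WellFoundedLT α] (hs : IsChain (· ≤ ·) s) (hne : s.Nonempty) :
    ∃ m, IsLeast s m :=
  let ⟨m, hm⟩ := exists_minimal_of_wellFoundedLT (· ∈ s) hne
  ⟨m, hs.isLeast_of_minimal hm⟩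

lemma IsMaxChain.isMin_of_isLeast (hs : IsMaxChain (· ≤ ·) s) (hm : IsLeast s m) : IsMin m := by
  intro z hzm
  have hchain : IsChain (· ≤ ·) (insert z s) :=
    hs.1.insert fun w hw _ => .inl (hzm.trans (hm.2 hw))
  have hz : z ∈ s := by
    rw [hs.2 hchain (Set.subset_insert z s)]
    exact Set.mem_insert z s
  exact hm.2 hz

end Chain

section Coloring

variable {α : Type*} [PartialOrder α] [WellFoundedLT α]

lemma IsMaxChain.exists_isMin_not_isMin {s : Set α} (hs : IsMaxChain (· ≤ ·) s)
    (hnt : s.Nontrivial) : ∃ m ∈ s, ∃ w ∈ s, IsMin m ∧ ¬ IsMin w := by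
  obtain ⟨m, hm⟩ := hs.1.exists_isLeast hnt.nonempty
  obtain ⟨w, hw, hwm⟩ := hnt.exists_ne m
  exact ⟨m, hm.1, w, hw, hs.isMin_of_isLeast hm, not_isMin_of_lt ((hm.2 hw).lt_of_ne hwm.symm)⟩

open Classical in
theorem cliqueColoring_fromRel_le_isMin :
    CliqueColoring (fromRel (· ≤ ·) : SimpleGraph α)
      fun x => if IsMin x then (0 : Fin 2) else 1 := by
  rintro s hs hnt ⟨a, ha⟩
  obtain ⟨m, hm, w, hw, hmin, hwmin⟩ :=
    (maxClique_fromRel_le_iff.1 hs).exists_isMin_not_isMin hnt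
  have hcol := (ha m hm).trans (ha w hw).symm
  simp [hmin, hwmin] at hcol

end Coloring

/-- Every comparability graph has clique chromatic number at most 2. -/
theorem stmt1 {X : Type*} [Fintype X] [PartialOrder X] :
    cliqueChromaticNumber (SimpleGraph.fromRel (fun x y : X => x ≤ y)) ≤ 2 :=
  Nat.sInf_le ⟨_, cliqueColoring_fromRel_le_isMin⟩
end

section
/- Every graph on n vertices has clique chromatic number at most 2·⌈√n⌉ + 1. -/
/-!
Kotlov's argument. Call a colour class dominated if some vertex of another colour is adjacent to
all of it: a maximal clique never lies inside a dominated class, since the dominating vertex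
would extend it. While some vertex `v` has at least `m = ⌈√n⌉` neighbours among the remaining
vertices, give `v` a common centre colour and its remaining neighbourhood a fresh colour (dominated
by `v`), and delete both. Each round removes `m + 1` of the `n ≤ m²` vertices, so there are at
most `m` rounds; what is left has degrees `< m` and is properly coloured greedily with `m` colours.
-/

open SimpleGraph

section CliqueColoring

variable {V α β : Type*} {G : SimpleGraph V}

theorem CliqueColoring.of_comp {c : V → α} {f : α → β} (h : CliqueColoring G (f ∘ c)) :
    CliqueColoring G c :=
  fun s hs hne ⟨a, ha⟩ => h s hs hne ⟨f a, fun x hx => by simp [ha x hx]⟩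

theorem cliqueColoring_of_adj_of_eq {c : V → α}
    (h : ∀ x y, G.Adj x y → c x = c y → ∃ v, c v ≠ c x ∧ ∀ z, c z = c x → G.Adj v z) :
    CliqueColoring G c := by
  rintro s ⟨hclique, hmax⟩ ⟨x, hx, y, hy, hxy⟩ ⟨a, ha⟩
  obtain ⟨v, hvx, hv⟩ := h x y (hclique hx hy hxy) (by rw [ha x hx, ha y hy])
  have hvs : v ∉ s := fun hvs => hvx (by rw [ha v hvs, ha x hx])
  have hins : G.IsClique (insert v s) :=
    hclique.insert fun z hz _ => hv z (by rw [ha z hz, ha x hx])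
  exact hvs (hmax _ hins (Set.subset_insert v s) ▸ Set.mem_insert v s)

theorem cliqueChromaticNumber_le_of_cliqueColoring {c : V → ℕ} {N : ℕ} (hc : CliqueColoring G c)
    (hlt : ∀ x, c x < N) : cliqueChromaticNumber G ≤ N :=
  Nat.sInf_le ⟨fun x => ⟨c x, hlt x⟩, CliqueColoring.of_comp (f := Fin.val) hc⟩

end CliqueColoring

section Kotlov

open Finset

variable {V : Type*} [DecidableEq V] (G : SimpleGraph V) [DecidableRel G.Adj]

theorem exists_proper_coloring_of_degree_lt (m : ℕ) (W : Finset V)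
    (hdeg : ∀ v ∈ W, #{w ∈ W | G.Adj v w} < m) :
    ∃ c : V → ℕ, (∀ x ∈ W, c x < m) ∧ ∀ x ∈ W, ∀ y ∈ W, G.Adj x y → c x ≠ c y := by
  induction W using Finset.induction_on with
  | empty => exact ⟨fun _ => 0, by simp, by simp⟩
  | insert u W _ ih =>
    obtain ⟨c, hlt, hproper⟩ := ih fun v hv =>
      (card_le_card (filter_subset_filter _ (subset_insert u W))).trans_lt
        (hdeg v (mem_insert_of_mem hv))
    obtain ⟨a, ha, hfree⟩ := exists_mem_notMem_of_card_lt_card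
      (s := image c {w ∈ W | G.Adj u w}) (t := range m) <| by
        rw [card_range]
        exact card_image_le.trans_lt <| (card_le_card (filter_subset_filter _
          (subset_insert u W))).trans_lt (hdeg u (mem_insert_self u W))
    have hfree' : ∀ w ∈ W, G.Adj u w → c w ≠ a := fun w hw huw hwa =>
      hfree (mem_image.2 ⟨w, mem_filter.2 ⟨hw, huw⟩, hwa⟩)
    have hW : ∀ x ∈ insert u W, x ≠ u → x ∈ W := fun x hx hxu => mem_of_mem_insert_of_ne hx hxu
    refine ⟨Function.update c u a, fun x hx => ?_, fun x hx y hy hxy => ?_⟩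
    · rcases eq_or_ne x u with rfl | hxu
      · simpa using ha
      · simpa [hxu] using hlt x (hW x hx hxu)
    have hne := G.ne_of_adj hxy
    rcases eq_or_ne x u with rfl | hxu
    · simpa [hne.symm] using (hfree' y (hW y hy hne.symm) hxy).symm
    rcases eq_or_ne y u with rfl | hyu
    · simpa [hxu] using hfree' x (hW x hx hxu) hxy.symm
    · simpa [hxu, hyu] using hproper x (hW x hx hxu) y (hW y hy hyu) hxy

/-- Kotlov's invariant on `W` after `k` rounds: colours `< m` come from the greedy proper colouring,
`m` is the colour of the centres and `m + 1 + i` that of the neighbourhood removed in round `i`. -/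
def IsKotlovColoring (m k : ℕ) (W : Finset V) (c : V → ℕ) : Prop :=
  (∀ x ∈ W, c x < m + 1 + k) ∧
    ∀ x ∈ W, ∀ y ∈ W, G.Adj x y → c x = c y →
      m < c x ∧ ∃ v ∈ W, c v ≠ c x ∧ ∀ z ∈ W, c z = c x → G.Adj v z

theorem isKotlovColoring_zero_of_degree_lt (m : ℕ) (W : Finset V)
    (hdeg : ∀ v ∈ W, #{w ∈ W | G.Adj v w} < m) : ∃ c, IsKotlovColoring G m 0 W c := by
  obtain ⟨c, hlt, hproper⟩ := exists_proper_coloring_of_degree_lt G m W hdeg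
  exact ⟨c, fun x hx => by have := hlt x hx; omega,
    fun x hx y hy hxy hc => absurd hc (hproper x hx y hy hxy)⟩

theorem IsKotlovColoring.insert_star {m k : ℕ} {W : Finset V} {v : V} {c : V → ℕ} (hv : v ∈ W)
    (hc : IsKotlovColoring G m k (W \ insert v {w ∈ W | G.Adj v w}) c) :
    IsKotlovColoring G m (k + 1) W
      (fun x => if x = v then m else if G.Adj v x then m + 1 + k else c x) := by
  set W' := W \ insert v {w ∈ W | G.Adj v w}
  set c' := fun x => if x = v then m else if G.Adj v x then m + 1 + k else c x
  have hmem : ∀ z, z ∈ W' ↔ z ∈ W ∧ z ≠ v ∧ ¬ G.Adj v z := by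
    intro z
    simp only [W', mem_sdiff, mem_insert, mem_filter]
    tauto
  have hcases : ∀ z ∈ W, (z = v ∧ c' z = m) ∨ (G.Adj v z ∧ c' z = m + 1 + k) ∨
      (z ∈ W' ∧ c' z = c z ∧ c z < m + 1 + k) := by
    intro z hz
    by_cases hzv : z = v
    · simp [c', hzv]
    by_cases hvz : G.Adj v z
    · simp [c', hzv, hvz]
    have hzW' : z ∈ W' := (hmem z).2 ⟨hz, hzv, hvz⟩
    simp [c', hzv, hvz, hzW', hc.1 z hzW']
  refine ⟨fun x hx => ?_, fun x hx y hy hxy hxyc => ?_⟩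
  · rcases hcases x hx with ⟨-, h⟩ | ⟨-, h⟩ | ⟨-, h, h'⟩ <;> omega
  rcases hcases x hx with ⟨rfl, hx'⟩ | ⟨hvx, hx'⟩ | ⟨hxW', hx', hxlt⟩
  · rcases hcases y hy with ⟨rfl, -⟩ | ⟨-, hy'⟩ | ⟨hyW', -⟩
    · exact absurd hxy G.irrefl
    · omega
    · exact absurd hxy ((hmem y).1 hyW').2.2
  · refine ⟨by omega, v, hv, by rw [hx', show c' v = m by simp [c']]; omega, fun z hz hz' => ?_⟩
    rcases hcases z hz with ⟨-, h⟩ | ⟨h, -⟩ | ⟨-, h, h'⟩ <;> first | exact h | omega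
  rcases hcases y hy with ⟨rfl, -⟩ | ⟨-, hy'⟩ | ⟨hyW', hy', -⟩
  · exact absurd hxy.symm ((hmem x).1 hxW').2.2
  · omega
  obtain ⟨hm, u, huW', hu, hdom⟩ := hc.2 x hxW' y hyW' hxy (by omega)
  have hu' : c' u = c u := by simp [c', ((hmem u).1 huW').2.1, ((hmem u).1 huW').2.2]
  refine ⟨by omega, u, ((hmem u).1 huW').1, by omega, fun z hz hz' => ?_⟩
  rcases hcases z hz with ⟨-, h⟩ | ⟨-, h⟩ | ⟨hzW', h, -⟩
  · omega
  · omega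
  · exact hdom z hzW' (by omega)

theorem exists_isKotlovColoring (m : ℕ) (W : Finset V) :
    ∃ k c, k * (m + 1) ≤ #W ∧ IsKotlovColoring G m k W c := by
  induction W using Finset.strongInduction with
  | H W ih =>
    by_cases hbig : ∃ v ∈ W, m ≤ #{w ∈ W | G.Adj v w}
    · obtain ⟨v, hv, hdeg⟩ := hbig
      set D := insert v {w ∈ W | G.Adj v w}
      have hDW : D ⊆ W := insert_subset hv (filter_subset _ _)
      have hD : m + 1 ≤ #D := by rw [card_insert_of_notMem (by simp)]; omega
      obtain ⟨k, c, hk, hc⟩ := ih (W \ D) (sdiff_ssubset hDW ⟨v, mem_insert_self _ _⟩)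
      have hsplit := card_sdiff_add_card_eq_card hDW
      exact ⟨k + 1, _, by rw [Nat.succ_mul]; omega, hc.insert_star G hv⟩
    · push Not at hbig
      obtain ⟨c, hc⟩ := isKotlovColoring_zero_of_degree_lt G m W hbig
      exact ⟨0, c, by simp, hc⟩

end Kotlov

/-- Every graph on `n` vertices has clique chromatic number at most `2⌈√n⌉ + 1`. -/
theorem stmt5 {V : Type*} [Fintype V] (G : SimpleGraph V) :
    cliqueChromaticNumber G ≤
      2 * ⌈Real.sqrt (Fintype.card V)⌉₊ + 1 := by
  classical
  set m := ⌈Real.sqrt (Fintype.card V)⌉₊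
  have hcard : Fintype.card V ≤ m * m := by
    have := (Real.sqrt_le_iff.1 (Nat.le_ceil (Real.sqrt (Fintype.card V)))).2
    exact_mod_cast (pow_two (m : ℝ)) ▸ this
  obtain ⟨k, c, hk, hlt, hdom⟩ := exists_isKotlovColoring G m Finset.univ
  rw [Finset.card_univ] at hk
  have hkm : k ≤ m := Nat.le_of_mul_le_mul_right (by nlinarith) m.succ_pos
  refine cliqueChromaticNumber_le_of_cliqueColoring (c := c)
    (cliqueColoring_of_adj_of_eq fun x y hxy hxyc => ?_) fun x => ?_
  · obtain ⟨-, v, -, hv, hdom⟩ := hdom x (Finset.mem_univ x) y (Finset.mem_univ y) hxy hxyc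
    exact ⟨v, hv, fun z hz => hdom z (Finset.mem_univ z) hz⟩
  · have := hlt x (Finset.mem_univ x)
    omega
end

section
/- If every graph of maximum degree at most D has clique chromatic number at most f(D) for a monotone function f, then every n-vertex graph has clique chromatic number at most ⌈√(n/log n)⌉ + 1 + f(⌈√(n·log n)⌉). In particular, the O(Δ/log Δ) bound for bounded-degree graphs implies the O(√(n/log n)) bound for n-vertex graphs. -/
/-!
Greedily pick a vertex with more than `M = ⌈√(n log n)⌉` neighbours among the remaining
vertices and delete it together with those neighbours. Each step removes at least `M + 2`
vertices, so at most `⌈√(n / log n)⌉` vertices are picked; they form an independent set `C`,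
and the vertices never deleted span a graph of maximum degree at most `M`. Give `C` one colour,
every other deleted vertex the colour of one of its neighbours in `C`, and the rest an optimal
clique colouring of the graph they span. A maximal clique with two vertices is not inside the
independent set `C`; it is not inside the class of `c ∈ C`, since `c` is adjacent to all of
that class but not in it, so the clique would extend by `c`; and a maximal clique inside the
remainder is maximal in the induced graph as well.
-/

open SimpleGraph

open Finset

namespace CliqueColoring

variable {V α β : Type*} {G : SimpleGraph V}

theorem of_injective {c : V → α} (hc : Function.Injective c) : CliqueColoring G c := by
  rintro s - ⟨x, hx, y, hy, hxy⟩ ⟨a, ha⟩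
  exact hxy (hc ((ha x hx).trans (ha y hy).symm))

theorem comp_injective {c : V → α} (hc : CliqueColoring G c) {g : α → β}
    (hg : Function.Injective g) : CliqueColoring G (g ∘ c) := by
  rintro s hs hne ⟨a, ha⟩
  have ⟨x, hx, _⟩ := hne
  exact hc s hs hne ⟨c x, fun u hu => hg ((ha u hu).trans (ha x hx).symm)⟩

end CliqueColoring

theorem exists_cliqueColoring_fin {V : Type*} [Finite V] (G : SimpleGraph V) :
    ∃ c : V → Fin (cliqueChromaticNumber G), CliqueColoring G c :=
  Nat.sInf_mem (s := {n | ∃ c : V → Fin n, CliqueColoring G c})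
    ⟨_, _, CliqueColoring.of_injective (Finite.equivFin V).injective⟩

theorem cliqueChromaticNumber_le_card {V α : Type*} [Fintype α] {G : SimpleGraph V}
    {c : V → α} (hc : CliqueColoring G c) : cliqueChromaticNumber G ≤ Fintype.card α :=
  Nat.sInf_le ⟨_, hc.comp_injective (Fintype.equivFin α).injective⟩

namespace MaxClique

variable {V : Type*} {G : SimpleGraph V} {s : Set V}

theorem mem_of_forall_adj (hs : MaxClique G s) {v : V} (hv : ∀ u ∈ s, G.Adj v u) : v ∈ s := by
  rw [← hs.2 (insert v s) (hs.1.insert fun u hu _ => hv u hu) (Set.subset_insert v s)]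
  exact Set.mem_insert v s

theorem preimage_induce (hs : MaxClique G s) {R : Set V} (hsR : s ⊆ R) :
    MaxClique (G.induce R) (Subtype.val ⁻¹' s) := by
  refine ⟨fun u hu w hw huw => hs.1 hu hw (Subtype.val_injective.ne huw), fun t ht hst => ?_⟩
  have himage : G.IsClique (Subtype.val '' t) := by
    rintro _ ⟨u, hu, rfl⟩ _ ⟨w, hw, rfl⟩ huw
    exact ht hu hw (ne_of_apply_ne _ huw)
  have hsub : s ⊆ Subtype.val '' t := fun u hu => ⟨⟨u, hsR hu⟩, hst hu, rfl⟩
  rw [← hs.2 _ himage hsub, Set.preimage_image_eq _ Subtype.val_injective]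

end MaxClique

namespace SimpleGraph

variable {V : Type*} (G : SimpleGraph V)

def undominated (C : Set V) : Set V := {w | w ∉ C ∧ ∀ c ∈ C, ¬ G.Adj c w}

theorem mem_undominated_insert {v w : V} {C : Set V} :
    w ∈ G.undominated (insert v C) ↔ (w ≠ v ∧ ¬ G.Adj v w) ∧ w ∈ G.undominated C := by
  simp only [undominated, Set.mem_insert_iff, Set.mem_ofPred_eq, forall_eq_or_imp, not_or]
  tauto

theorem degree_induce_eq_card_filter [Fintype V] [DecidableRel G.Adj] (s : Set V)
    [DecidablePred (· ∈ s)] (w : s) : (G.induce s).degree w = #{u | u ∈ s ∧ G.Adj w u} := by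
  classical
  rw [← card_neighborFinset_eq_degree, ← card_map, map_neighborFinset_induce]
  congr 1
  ext u
  simp [and_comm]

theorem exists_cliqueColoring_of_isIndepSet {C : Set V} (hC : G.IsIndepSet C) {β : Type*}
    {κ : G.undominated C → β} (hκ : CliqueColoring (G.induce (G.undominated C)) κ) :
    ∃ c : V → Option C ⊕ β, CliqueColoring G c := by
  classical
  let c : V → Option C ⊕ β := fun u =>
    if hu : u ∈ C then .inl none
    else if hd : ∃ v ∈ C, G.Adj v u then .inl (some ⟨hd.choose, hd.choose_spec.1⟩)
    else .inr (κ ⟨u, hu, fun v hv hvu => hd ⟨v, hv, hvu⟩⟩)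
  have hnone {u : V} (h : c u = .inl none) : u ∈ C := by
    simp only [c] at h; split_ifs at h with hu <;> cases h; exact hu
  have hsome {u : V} {v : C} (h : c u = .inl (some v)) : G.Adj v u := by
    simp only [c] at h; split_ifs at h with hu hd <;> cases h; exact hd.choose_spec.2
  have hinr {u : V} {b : β} (h : c u = .inr b) : ∃ hu : u ∈ G.undominated C, κ ⟨u, hu⟩ = b := by
    simp only [c] at h; split_ifs at h with hu hd; cases h; exact ⟨_, rfl⟩
  refine ⟨c, fun s hs ⟨x, hx, y, hy, hxy⟩ ⟨a, ha⟩ => ?_⟩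
  rcases a with (_ | v) | b
  · exact hC (hnone (ha x hx)) (hnone (ha y hy)) hxy (hs.1 hx hy hxy)
  · have hvs : (v : V) ∈ s := hs.mem_of_forall_adj fun u hu => hsome (ha u hu)
    simpa [c, v.2] using ha v hvs
  · choose hsR hκs using fun u (hu : u ∈ s) => hinr (ha u hu)
    refine hκ _ (hs.preimage_induce hsR) ⟨⟨x, hsR x hx⟩, hx, ⟨y, hsR y hy⟩, hy, ?_⟩ ⟨b, ?_⟩
    · simpa using hxy
    · exact fun u hu => hκs u hu

open Classical in
theorem exists_isIndepSet_card_mul_le_undominated_degree_le (M : ℕ) (U : Finset V) :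
    ∃ C ⊆ U, #C * (M + 2) ≤ #U ∧ G.IsIndepSet (C : Set V) ∧
      ∀ w ∈ U, w ∈ G.undominated C → #{u ∈ U | u ∈ G.undominated C ∧ G.Adj w u} ≤ M := by
  induction U using Finset.strongInduction with
  | H U ih =>
  by_cases hv : ∃ v ∈ U, M + 1 ≤ #{u ∈ U | G.Adj v u}
  · obtain ⟨v, hvU, hdeg⟩ := hv
    have hclosed : M + 2 ≤ #{u ∈ U | ¬ (u ≠ v ∧ ¬ G.Adj v u)} := by
      refine hdeg.trans_lt (card_lt_card ?_)
      refine ssubset_iff_of_subset (fun u => ?_) |>.2 ⟨v, by simpa using hvU, by simp⟩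
      simp only [mem_filter]
      exact fun ⟨huU, hvu⟩ => ⟨huU, fun h => h.2 hvu⟩
    have hU' : #{u ∈ U | u ≠ v ∧ ¬ G.Adj v u} + (M + 2) ≤ #U := by
      have := card_filter_add_card_filter_not (s := U) (fun u => u ≠ v ∧ ¬ G.Adj v u)
      omega
    set U' := {u ∈ U | u ≠ v ∧ ¬ G.Adj v u}
    obtain ⟨C, hCU', hcard, hC, hdeg'⟩ := ih U' (filter_ssubset.2 ⟨v, hvU, by simp⟩)
    have hrest (w : V) : w ∈ U ∧ w ∈ G.undominated ↑(insert v C) ↔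
        w ∈ U' ∧ w ∈ G.undominated C := by
      simp only [U', coe_insert, mem_undominated_insert, mem_filter, and_assoc]
    refine ⟨insert v C, insert_subset hvU (hCU'.trans (filter_subset _ _)), ?_, ?_, ?_⟩
    · calc #(insert v C) * (M + 2) ≤ (#C + 1) * (M + 2) := by gcongr; exact card_insert_le _ _
        _ ≤ #U := by linarith
    · rw [coe_insert]
      refine hC.insert fun u hu _ => ?_
      have hvu := (mem_filter.1 (hCU' hu)).2.2
      exact ⟨hvu, mt G.adj_symm hvu⟩
    · intro w hwU hw
      obtain ⟨hwU', hw'⟩ := (hrest w).1 ⟨hwU, hw⟩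
      convert hdeg' w hwU' hw' using 2
      ext u
      simp only [mem_filter, ← and_assoc, hrest]
  · push Not at hv
    refine ⟨∅, empty_subset U, by simp, by simp, fun w hwU _ => ?_⟩
    exact (card_le_card (monotone_filter_right _ fun u _ h => h.2)).trans
      (Nat.le_of_lt_succ (hv w hwU))

end SimpleGraph

theorem le_ceil_sqrt_div_log_of_mul_le {n t : ℕ}
    (h : t * (⌈Real.sqrt (n * Real.log n)⌉₊ + 2) ≤ n) : t ≤ ⌈Real.sqrt (n / Real.log n)⌉₊ := by
  rcases le_or_gt n 1 with hn | hn
  · nlinarith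
  have hlog : 0 < Real.log n := Real.log_pos (by exact_mod_cast hn)
  set x := Real.sqrt (n / Real.log n)
  set y := Real.sqrt (n * Real.log n)
  have hy : 0 < y := Real.sqrt_pos.2 (by positivity)
  have hxy : x * y = n := by
    rw [← Real.sqrt_mul (by positivity), show (n / Real.log n) * (n * Real.log n) = (n : ℝ) * n by
      field_simp, Real.sqrt_mul_self n.cast_nonneg]
  have htx : (t : ℝ) ≤ x := by
    refine le_of_mul_le_mul_right ?_ hy
    calc (t : ℝ) * y ≤ t * (⌈y⌉₊ + 2) := by gcongr; linarith [Nat.le_ceil y]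
      _ ≤ n := by exact_mod_cast h
      _ = x * y := hxy.symm
  exact_mod_cast htx.trans (Nat.le_ceil x)

theorem stmt6_general (f : ℕ → ℕ)
    (h : ∀ (W : Type) (_ : Fintype W) (H : SimpleGraph W) (_ : DecidableRel H.Adj) (D : ℕ),
        (∀ w : W, H.degree w ≤ D) → cliqueChromaticNumber H ≤ f D)
    (V : Type) [Fintype V] (G : SimpleGraph V) :
    cliqueChromaticNumber G ≤
      ⌈Real.sqrt ((Fintype.card V : ℝ) / Real.log (Fintype.card V))⌉₊ + 1 +
        f ⌈Real.sqrt ((Fintype.card V : ℝ) * Real.log (Fintype.card V))⌉₊ := by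
  classical
  set M := ⌈Real.sqrt ((Fintype.card V : ℝ) * Real.log (Fintype.card V))⌉₊
  obtain ⟨C, -, hcard, hC, hdeg⟩ :=
    G.exists_isIndepSet_card_mul_le_undominated_degree_le M univ
  set R := G.undominated C
  have hR : cliqueChromaticNumber (G.induce R) ≤ f M := by
    refine h R inferInstance _ inferInstance M fun w => ?_
    rw [degree_induce_eq_card_filter]
    exact hdeg w (mem_univ _) w.2
  obtain ⟨κ, hκ⟩ := exists_cliqueColoring_fin (G.induce R)
  obtain ⟨c, hc⟩ := G.exists_cliqueColoring_of_isIndepSet hC hκ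
  calc cliqueChromaticNumber G ≤ #C + 1 + cliqueChromaticNumber (G.induce R) := by
        simpa using cliqueChromaticNumber_le_card hc
    _ ≤ _ := by
        gcongr
        exact le_ceil_sqrt_div_log_of_mul_le (hcard.trans_eq card_univ)

/-- A monotone clique-chromatic bound `f(D)` for graphs of maximum degree at most `D`
implies the bound `⌈√(n/log n)⌉ + 1 + f(⌈√(n log n)⌉)` for `n`-vertex graphs. -/
theorem stmt6 (f : ℕ → ℕ) (hf : Monotone f)
    (h : ∀ (W : Type) (_ : Fintype W) (H : SimpleGraph W) (_ : DecidableRel H.Adj) (D : ℕ),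
        (∀ w : W, H.degree w ≤ D) → cliqueChromaticNumber H ≤ f D)
    (V : Type) [Fintype V] (G : SimpleGraph V) [DecidableRel G.Adj] :
    cliqueChromaticNumber G ≤
      ⌈Real.sqrt ((Fintype.card V : ℝ) / Real.log (Fintype.card V))⌉₊ + 1 +
        f ⌈Real.sqrt ((Fintype.card V : ℝ) * Real.log (Fintype.card V))⌉₊ :=
  stmt6_general f h V G
end

section
/- Let G be a graph, v a vertex of G, and σ a partial colouring of G (with some vertices possibly uncoloured, i.e., Blank) such that no maximal clique of size at least two is monochromatic in a non-Blank colour. Suppose each vertex u ∈ N(v) is recoloured with a colour that does not appear (under the new colouring) on any neighbour of u outside N(v), or with Blank, while vertices outside N(v) keep their colours. Then in the resulting partial colouring, no maximal clique of size at least two is monochromatic in a non-Blank colour. -/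
open SimpleGraph

/-!
A maximal clique `s` cannot lie inside `N(v)`, since then `insert v s` would be a larger clique;
so `s` has a vertex `w ∉ N(v)`. If `s` also meets `N(v)` in some `u`, then `u` and `w` are
adjacent and, by the choice of the new colour of `u`, differently coloured unless `u` is Blank.
Otherwise `s` avoids `N(v)`, keeps its old colours, and was not monochromatic to begin with.
-/

theorem MaxClique.exists_not_adj {V : Type*} {G : SimpleGraph V} {s : Set V}
    (hs : MaxClique G s) (v : V) : ∃ w ∈ s, ¬ G.Adj v w := by
  by_contra! hadj
  have hins : insert v s = s :=
    hs.2 _ (hs.1.insert fun b hb _ => hadj b hb) (Set.subset_insert v s)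
  exact G.loopless.irrefl v (hadj v (hins ▸ Set.mem_insert v s))

/-- Recolouring the neighbourhood of `v`, giving each `u ∈ N(v)` either Blank (`none`)
or a colour not appearing on its neighbours outside `N(v)`, preserves the property
that no maximal clique of size at least two is monochromatic in a non-Blank colour. -/
theorem stmt7 {V : Type*} (G : SimpleGraph V) (v : V) (σ τ : V → Option ℕ)
    (hσ : ∀ s : Set V, MaxClique G s → (∃ x ∈ s, ∃ y ∈ s, x ≠ y) →
      ¬ ∃ c : ℕ, ∀ x ∈ s, σ x = some c)
    (hkeep : ∀ u : V, ¬ G.Adj v u → τ u = σ u)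
    (hnew : ∀ u : V, G.Adj v u →
      τ u = none ∨ ∀ w : V, G.Adj u w → ¬ G.Adj v w → τ w ≠ τ u) :
    ∀ s : Set V, MaxClique G s → (∃ x ∈ s, ∃ y ∈ s, x ≠ y) →
      ¬ ∃ c : ℕ, ∀ x ∈ s, τ x = some c := by
  rintro s hs hsize ⟨c, hc⟩
  obtain ⟨w, hws, hwv⟩ := hs.exists_not_adj v
  by_cases hmeets : ∃ u ∈ s, G.Adj v u
  · obtain ⟨u, hus, huv⟩ := hmeets
    have huw : u ≠ w := fun h => hwv (h ▸ huv)
    rcases hnew u huv with hblank | hfresh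
    · exact Option.some_ne_none c (hc u hus ▸ hblank)
    · exact hfresh w (hs.1 hus hws huw) hwv ((hc w hws).trans (hc u hus).symm)
  · push Not at hmeets
    exact hσ s hs hsize ⟨c, fun x hx => (hkeep x (hmeets x hx)).symm.trans (hc x hx)⟩
end
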